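/- arXiv:2206.11687 — 2 statements merged into one kernel-verified Lean document; each statement's English description precedes it below -/
import Mathlib

section
/- Let g > 0 and α ∈ (0,1), and set α_n = min{1, g/n^α}. Then for every x > 0, lim_{n→∞} P[K_n / n^α ≤ x] = 1 - e^{-gx}, i.e., K_n/n^α converges in distribution to the exponential distribution with rate g. -/
open Finset Filter Topology

/-- The law of the snapshot chain `K_n` with reset probabilities `a`:
`p n k = P[K_n = k]`, with `K_1 = 1` a.s., support `{1,…,n}`,
`P[K_{n+1} = 1] = a (n+1)` and `P[K_{n+1} = k+1] = (1 - a (n+1)) * P[K_n = k]`. -/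
def IsSnapshotLaw (a : ℕ → ℝ) (p : ℕ → ℕ → ℝ) : Prop :=
  p 1 1 = 1 ∧
  (∀ n k, 1 ≤ n → (k = 0 ∨ n < k) → p n k = 0) ∧
  (∀ n, 1 ≤ n → p (n + 1) 1 = a (n + 1)) ∧
  (∀ n k, 1 ≤ n → 1 ≤ k → k ≤ n → p (n + 1) (k + 1) = (1 - a (n + 1)) * p n k)

/-- `E[K_n]` for the snapshot chain with law `p`. -/
noncomputable def snapExp (p : ℕ → ℕ → ℝ) (n : ℕ) : ℝ :=
  ∑ k ∈ Finset.Icc 1 n, (k : ℝ) * p n k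

lemma snap_shift (f : ℕ → ℝ) (m n : ℕ) :
    ∑ j ∈ Finset.Icc (m + 1) (n + 1), f j = ∑ j ∈ Finset.Icc m n, f (j + 1) := by
  rw [← Finset.map_add_right_Icc _ _ 1, Finset.sum_map]
  rfl

lemma snap_mass {a : ℕ → ℝ} {p : ℕ → ℕ → ℝ} (hp : IsSnapshotLaw a p) :
    ∀ n, 1 ≤ n → ∑ k ∈ Finset.Icc 1 n, p n k = 1 := by
  obtain ⟨h1, h0, hr1, hrs⟩ := hp
  intro n hn
  induction n with
  | zero => omega
  | succ n ih =>
    rcases Nat.lt_or_ge n 1 with h | h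
    · interval_cases n
      simpa using h1
    · have hsplit : ∑ k ∈ Finset.Icc 1 1, p (n+1) k + ∑ k ∈ Finset.Icc 2 (n+1), p (n+1) k
          = ∑ k ∈ Finset.Icc 1 (n+1), p (n+1) k := by
      -- use Ioc consecutive
        rw [show Finset.Icc 1 1 = Finset.Ioc 0 1 by rfl,
          show Finset.Icc 2 (n+1) = Finset.Ioc 1 (n+1) by rfl,
          show Finset.Icc 1 (n+1) = Finset.Ioc 0 (n+1) by rfl]
        exact Finset.sum_Ioc_consecutive _ (by omega) (by omega)
      rw [← hsplit]
      have : ∑ k ∈ Finset.Icc 2 (n+1), p (n+1) k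
          = ∑ k ∈ Finset.Icc 1 n, (1 - a (n+1)) * p n k := by
        rw [show (2:ℕ) = 1 + 1 from rfl, snap_shift]
        refine Finset.sum_congr rfl fun k hk => ?_
        simp only [Finset.mem_Icc] at hk
        exact hrs n k h hk.1 hk.2
      rw [this, ← Finset.mul_sum, ih h]
      simp [hr1 n h]

lemma snap_tail {a : ℕ → ℝ} {p : ℕ → ℕ → ℝ} (hp : IsSnapshotLaw a p) :
    ∀ n, 1 ≤ n → ∀ k, 1 ≤ k → k ≤ n →
      ∑ j ∈ Finset.Icc k n, p n j = ∏ i ∈ Finset.Icc (n - k + 2) n, (1 - a i) := by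
  intro n hn
  induction n with
  | zero => omega
  | succ n ih =>
    intro k hk hkn
    rcases Nat.eq_or_lt_of_le hk with h | h
    · -- k = 1
      subst h
      rw [snap_mass hp (n+1) (by omega)]
      rw [show n + 1 - 1 + 2 = n + 2 by omega, Finset.Icc_eq_empty (by omega), Finset.prod_empty]
    · -- k = k' + 1 with 1 ≤ k' ≤ n
      obtain ⟨k', rfl⟩ : ∃ k', k = k' + 1 := ⟨k - 1, by omega⟩
      have hk' : 1 ≤ k' := by omega
      have hk'n : k' ≤ n := by omega
      have hn1 : 1 ≤ n := by omega
      rw [snap_shift]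
      have : ∑ j ∈ Finset.Icc k' n, p (n+1) (j+1)
          = ∑ j ∈ Finset.Icc k' n, (1 - a (n+1)) * p n j := by
        refine Finset.sum_congr rfl fun j hj => ?_
        simp only [Finset.mem_Icc] at hj
        exact hp.2.2.2 n j hn1 (by omega) hj.2
      rw [this, ← Finset.mul_sum, ih hn1 k' hk' hk'n]
      rw [show n + 1 - (k' + 1) + 2 = n - k' + 2 by omega]
      rw [Finset.prod_Icc_succ_top (by omega)]
      ring

lemma snap_pow_lim (g x : ℝ) (hg : 0 < g) (b : ℕ → ℝ) (M : ℕ → ℕ)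
    (hb : Tendsto b atTop atTop) (hM : Tendsto (fun n => (M n : ℝ) / b n) atTop (𝓝 x)) :
    Tendsto (fun n => (1 - g / b n) ^ (M n)) atTop (𝓝 (Real.exp (-(g * x)))) := by
  have h1 : Tendsto (fun n => b n * Real.log (1 + (-g) / b n)) atTop (𝓝 (-g)) :=
    (Real.tendsto_mul_log_one_add_div_atTop (-g)).comp hb
  have h2 : Tendsto (fun n => (M n : ℝ) / b n * (b n * Real.log (1 + (-g) / b n)))
      atTop (𝓝 (x * -g)) := hM.mul h1
  have h3 : Tendsto (fun n => Real.exp ((M n : ℝ) / b n * (b n * Real.log (1 + (-g) / b n))))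
      atTop (𝓝 (Real.exp (x * -g))) := (Real.continuous_exp.tendsto _).comp h2
  rw [show -(g * x) = x * -g by ring]
  refine h3.congr' ?_
  filter_upwards [hb.eventually_ge_atTop (max 1 (2 * g))] with n hn
  have hb1 : (1 : ℝ) ≤ b n := le_trans (le_max_left _ _) hn
  have hb0 : (0 : ℝ) < b n := by linarith
  have hgb : g / b n ≤ 1 / 2 := by
    rw [div_le_div_iff₀ hb0 (by norm_num)]
    have : 2 * g ≤ b n := le_trans (le_max_right _ _) hn
    linarith
  have ht : (0 : ℝ) < 1 - g / b n := by linarith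
  have : (M n : ℝ) / b n * (b n * Real.log (1 + (-g) / b n))
      = (M n : ℝ) * Real.log (1 - g / b n) := by
    rw [show (1 : ℝ) + (-g) / b n = 1 - g / b n by ring]
    field_simp
  rw [this, Real.exp_nat_mul, Real.exp_log ht]

theorem snapshot_sublinear_exponential_limit (g al : ℝ) (hg : 0 < g)
    (hal : al ∈ Set.Ioo (0 : ℝ) 1) (a : ℕ → ℝ) (p : ℕ → ℕ → ℝ)
    (ha : ∀ n, a n = min 1 (g / (n : ℝ) ^ al))
    (hp : IsSnapshotLaw a p) (x : ℝ) (hx : 0 < x) :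
    Tendsto
      (fun n : ℕ => ∑ k ∈ (Finset.Icc 1 n).filter (fun k : ℕ => (k : ℝ) ≤ (n : ℝ) ^ al * x), p n k)
      atTop (nhds (1 - Real.exp (-(g * x)))) := by
  obtain ⟨hal0, hal1⟩ := hal
  set M : ℕ → ℕ := fun n => ⌊(n : ℝ) ^ al * x⌋₊ with hMdef
  set c : ℕ → ℕ := fun n => n - M n + 1 with hcdef
  -- basic limits
  have hpow : Tendsto (fun n : ℕ => (n : ℝ) ^ al) atTop atTop :=
    (tendsto_rpow_atTop hal0).comp tendsto_natCast_atTop_atTop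
  have hpow_pos : ∀ᶠ n : ℕ in atTop, (0 : ℝ) < (n : ℝ) ^ al := hpow.eventually_gt_atTop 0
  -- M n / n^al → x
  have hMdiv : Tendsto (fun n : ℕ => (M n : ℝ) / (n : ℝ) ^ al) atTop (𝓝 x) := by
    have hlo : Tendsto (fun n : ℕ => x - 1 / (n : ℝ) ^ al) atTop (𝓝 (x - 0)) :=
      tendsto_const_nhds.sub (tendsto_const_nhds.div_atTop hpow)
    rw [sub_zero] at hlo
    refine tendsto_of_tendsto_of_tendsto_of_le_of_le' hlo tendsto_const_nhds ?_ ?_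
    · filter_upwards [hpow_pos] with n hn
      have h1 : (n : ℝ) ^ al * x - 1 < (M n : ℝ) := Nat.sub_one_lt_floor _
      rw [le_div_iff₀ hn]
      have he : (x - 1 / (n : ℝ) ^ al) * (n : ℝ) ^ al = (n : ℝ) ^ al * x - 1 := by
        field_simp
      rw [he]
      linarith
    · filter_upwards [hpow_pos] with n hn
      rw [div_le_iff₀ hn]
      calc (M n : ℝ) ≤ (n : ℝ) ^ al * x := Nat.floor_le (by positivity)
        _ = x * (n : ℝ) ^ al := by ring
  -- M n / n → 0
  have hrp0 : Tendsto (fun n : ℕ => (n : ℝ) ^ (al - 1)) atTop (𝓝 0) :=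
    (tendsto_rpow_neg_atTop (y := 1 - al) (by linarith)).comp tendsto_natCast_atTop_atTop |>.congr
      (fun n => by rw [Function.comp_apply]; congr 1; ring)
  have hMn0 : Tendsto (fun n : ℕ => (M n : ℝ) / (n : ℝ)) atTop (𝓝 0) := by
    have := hMdiv.mul hrp0
    rw [mul_zero] at this
    refine this.congr' ?_
    filter_upwards [eventually_ge_atTop 1] with n hn
    have hn0 : (0 : ℝ) < (n : ℝ) := by exact_mod_cast hn
    rw [Real.rpow_sub hn0, Real.rpow_one]
    field_simp
  -- c n / n → 1 and related
  have hMle : ∀ᶠ n : ℕ in atTop, M n + 1 ≤ n := by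
    have h2 := hMn0.eventually (gt_mem_nhds (by norm_num : (0:ℝ) < 1/2))
    filter_upwards [h2, eventually_ge_atTop 2] with n hn hn2
    have hn0 : (0 : ℝ) < (n : ℝ) := by positivity
    have : (M n : ℝ) < (n : ℝ) / 2 := by
      rw [div_lt_iff₀ hn0] at hn; rw [lt_div_iff₀ (by norm_num : (0:ℝ) < 2)]; linarith
    have : (M n : ℝ) < (n : ℝ) - 1 := by
      have : (2 : ℝ) ≤ (n : ℝ) := by exact_mod_cast hn2
      linarith
    have : (M n : ℝ) + 1 < (n : ℝ) := by linarith
    exact_mod_cast this.le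
  have hccast : ∀ᶠ n : ℕ in atTop, ((c n : ℕ) : ℝ) = (n : ℝ) - (M n : ℝ) + 1 := by
    filter_upwards [hMle] with n hn
    simp only [hcdef]
    push_cast [Nat.cast_sub (by omega : M n ≤ n)]
    ring
  have hcdiv : Tendsto (fun n : ℕ => ((c n : ℕ) : ℝ) / (n : ℝ)) atTop (𝓝 1) := by
    have h : Tendsto (fun n : ℕ => 1 - (M n : ℝ) / (n : ℝ) + 1 / (n : ℝ)) atTop (𝓝 (1 - 0 + 0)) :=
      (tendsto_const_nhds.sub hMn0).add (tendsto_const_nhds.div_atTop tendsto_natCast_atTop_atTop)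
    rw [sub_zero, add_zero] at h
    refine h.congr' ?_
    filter_upwards [hccast, eventually_ge_atTop 1] with n hc hn
    have hn0 : (0 : ℝ) < (n : ℝ) := by exact_mod_cast hn
    rw [hc]; field_simp
  have hcn : Tendsto (fun n : ℕ => ((c n : ℕ) : ℝ)) atTop atTop := by
    refine tendsto_atTop_mono' _ ?_ (tendsto_natCast_atTop_atTop.atTop_div_const (by norm_num : (0:ℝ) < 2))
    filter_upwards [hcdiv.eventually (eventually_ge_nhds (by norm_num : (1:ℝ)/2 < 1)),
      eventually_ge_atTop 1] with n h hn
    have hn0 : (0 : ℝ) < (n : ℝ) := by exact_mod_cast hn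
    rw [le_div_iff₀ hn0] at h
    linarith
  have hcpow : Tendsto (fun n : ℕ => ((c n : ℕ) : ℝ) ^ al) atTop atTop :=
    (tendsto_rpow_atTop hal0).comp hcn
  -- M n / (c n)^al → x
  have hnc : Tendsto (fun n : ℕ => (n : ℝ) / ((c n : ℕ) : ℝ)) atTop (𝓝 1) := by
    have := hcdiv.inv₀ one_ne_zero
    rw [inv_one] at this
    exact this.congr fun n => by rw [inv_div]
  have hMc : Tendsto (fun n : ℕ => (M n : ℝ) / ((c n : ℕ) : ℝ) ^ al) atTop (𝓝 x) := by
    have hr : Tendsto (fun n : ℕ => ((n : ℝ) / ((c n : ℕ) : ℝ)) ^ al) atTop (𝓝 1) := by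
      have := hnc.rpow_const (Or.inr hal0.le)
      rwa [Real.one_rpow] at this
    have h := hMdiv.mul hr
    rw [mul_one] at h
    refine h.congr' ?_
    filter_upwards [hpow_pos, hcn.eventually_gt_atTop 0] with n h1 h2
    rw [Real.div_rpow (Nat.cast_nonneg n) (le_of_lt h2)]
    have h3 : (0 : ℝ) < ((c n : ℕ) : ℝ) ^ al := Real.rpow_pos_of_pos h2 _
    field_simp
  -- the squeeze for the product
  have hupper := snap_pow_lim g x hg (fun n : ℕ => (n : ℝ) ^ al) M hpow hMdiv
  have hlower := snap_pow_lim g x hg (fun n : ℕ => ((c n : ℕ) : ℝ) ^ al) M hcpow hMc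
  have hprod : Tendsto (fun n : ℕ => ∏ i ∈ Finset.Icc (c n) n, (1 - a i)) atTop
      (𝓝 (Real.exp (-(g * x)))) := by
    refine tendsto_of_tendsto_of_tendsto_of_le_of_le' hlower hupper ?_ ?_
    · -- lower bound
      filter_upwards [hcpow.eventually_ge_atTop (2 * g), hMle, hcn.eventually_gt_atTop 0,
        hpow_pos] with n hcg hMn hc0 hn0
      have hcpos : (0 : ℝ) < ((c n : ℕ) : ℝ) ^ al := by
        apply Real.rpow_pos_of_pos hc0
      have hfac : (0 : ℝ) ≤ 1 - g / ((c n : ℕ) : ℝ) ^ al := by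
        rw [sub_nonneg, div_le_one hcpos]; linarith
      have hcard : (Finset.Icc (c n) n).card = M n := by
        rw [Nat.card_Icc]; simp only [hcdef]; omega
      calc (1 - g / ((c n : ℕ) : ℝ) ^ al) ^ M n
          = ∏ i ∈ Finset.Icc (c n) n, (1 - g / ((c n : ℕ) : ℝ) ^ al) := by
            rw [Finset.prod_const, hcard]
        _ ≤ ∏ i ∈ Finset.Icc (c n) n, (1 - a i) := by
            refine Finset.prod_le_prod (fun i _ => hfac) (fun i hi => ?_)
            simp only [Finset.mem_Icc] at hi
            have hile : ((c n : ℕ) : ℝ) ^ al ≤ (i : ℝ) ^ al :=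
              Real.rpow_le_rpow (Nat.cast_nonneg _) (by exact_mod_cast hi.1) hal0.le
            have hipos : (0 : ℝ) < (i : ℝ) ^ al := lt_of_lt_of_le hcpos hile
            have : a i ≤ g / ((c n : ℕ) : ℝ) ^ al := by
              rw [ha i]
              exact le_trans (min_le_right _ _)
                (div_le_div_of_nonneg_left hg.le hcpos hile)
            linarith
    · -- upper bound
      filter_upwards [hcpow.eventually_ge_atTop (2 * g), hMle, hcn.eventually_gt_atTop 0,
        hpow_pos] with n hcg hMn hc0 hn0
      have hcpos : (0 : ℝ) < ((c n : ℕ) : ℝ) ^ al := Real.rpow_pos_of_pos hc0 _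
      have hcard : (Finset.Icc (c n) n).card = M n := by
        rw [Nat.card_Icc]; simp only [hcdef]; omega
      have hstep : ∀ i ∈ Finset.Icc (c n) n, 0 ≤ 1 - a i ∧ 1 - a i ≤ 1 - g / (n : ℝ) ^ al := by
        intro i hi
        simp only [Finset.mem_Icc] at hi
        have hile : ((c n : ℕ) : ℝ) ^ al ≤ (i : ℝ) ^ al :=
          Real.rpow_le_rpow (Nat.cast_nonneg _) (by exact_mod_cast hi.1) hal0.le
        have hipos : (0 : ℝ) < (i : ℝ) ^ al := lt_of_lt_of_le hcpos hile
        have hin : (i : ℝ) ^ al ≤ (n : ℝ) ^ al :=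
          Real.rpow_le_rpow (Nat.cast_nonneg _) (by exact_mod_cast hi.2) hal0.le
        have hub : a i ≤ g / ((c n : ℕ) : ℝ) ^ al := by
          rw [ha i]
          exact le_trans (min_le_right _ _) (div_le_div_of_nonneg_left hg.le hcpos hile)
        have hai : a i = g / (i : ℝ) ^ al := by
          rw [ha i, min_eq_right]
          rw [div_le_one hipos]
          calc g ≤ 2 * g := by linarith
            _ ≤ ((c n : ℕ) : ℝ) ^ al := hcg
            _ ≤ (i : ℝ) ^ al := hile
        constructor
        · have : g / ((c n : ℕ) : ℝ) ^ al ≤ 1 := by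
            rw [div_le_one hcpos]; linarith
          linarith
        · have : g / (n : ℝ) ^ al ≤ g / (i : ℝ) ^ al :=
            div_le_div_of_nonneg_left hg.le hipos hin
          rw [hai]; linarith
      calc ∏ i ∈ Finset.Icc (c n) n, (1 - a i)
          ≤ ∏ i ∈ Finset.Icc (c n) n, (1 - g / (n : ℝ) ^ al) :=
            Finset.prod_le_prod (fun i hi => (hstep i hi).1) (fun i hi => (hstep i hi).2)
        _ = (1 - g / (n : ℝ) ^ al) ^ M n := by rw [Finset.prod_const, hcard]
  -- put it together
  have hfinal : Tendsto (fun n : ℕ => 1 - ∏ i ∈ Finset.Icc (c n) n, (1 - a i)) atTop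
      (𝓝 (1 - Real.exp (-(g * x)))) := tendsto_const_nhds.sub hprod
  refine hfinal.congr' ?_
  have hM1 : ∀ᶠ n : ℕ in atTop, 1 ≤ M n := by
    filter_upwards [(hpow.atTop_mul_const hx).eventually_ge_atTop 1] with n hn
    exact Nat.le_floor (by exact_mod_cast hn)
  filter_upwards [hM1, hMle, eventually_ge_atTop 1, hpow_pos] with n h1 h2 h3 hp0
  -- identify the filtered set
  have hset : (Finset.Icc 1 n).filter (fun k : ℕ => (k : ℝ) ≤ (n : ℝ) ^ al * x)
      = Finset.Icc 1 (M n) := by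
    ext k
    simp only [Finset.mem_filter, Finset.mem_Icc]
    constructor
    · rintro ⟨⟨hk1, hkn⟩, hkx⟩
      exact ⟨hk1, Nat.le_floor hkx⟩
    · rintro ⟨hk1, hkM⟩
      refine ⟨⟨hk1, by omega⟩, ?_⟩
      calc (k : ℝ) ≤ (M n : ℝ) := by exact_mod_cast hkM
        _ ≤ (n : ℝ) ^ al * x := Nat.floor_le (by positivity)
  have hsplit : ∑ k ∈ Finset.Icc 1 (M n), p n k + ∑ k ∈ Finset.Icc (M n + 1) n, p n k
      = ∑ k ∈ Finset.Icc 1 n, p n k := by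
    rw [show Finset.Icc 1 (M n) = Finset.Ioc 0 (M n) from Finset.Icc_add_one_left_eq_Ioc 0 (M n),
      show Finset.Icc (M n + 1) n = Finset.Ioc (M n) n from Finset.Icc_add_one_left_eq_Ioc _ _,
      show Finset.Icc 1 n = Finset.Ioc 0 n from Finset.Icc_add_one_left_eq_Ioc 0 n]
    exact Finset.sum_Ioc_consecutive _ (by omega) (by omega)
  have htail := snap_tail hp n h3 (M n + 1) (by omega) (by omega)
  rw [show n - (M n + 1) + 2 = n - M n + 1 by omega] at htail
  have hmass := snap_mass hp n h3
  rw [hset]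
  simp only [hcdef]
  linarith [hsplit, htail, hmass]
end

section
/- Let g > 0 and α_n = min{1, g/n}. Then lim_{n→∞} E[K_n]/n = 1/(g+1). -/
open Finset Filter

lemma sum_Icc_shift (f : ℕ → ℝ) (n : ℕ) :
    ∑ k ∈ Finset.Icc 1 (n + 1), f k = f 1 + ∑ k ∈ Finset.Icc 1 n, f (k + 1) := by
  induction n with
  | zero => simp
  | succ m ih =>
    rw [Finset.sum_Icc_succ_top (by omega) f, ih,
      Finset.sum_Icc_succ_top (by omega) (fun k => f (k + 1))]
    ring

lemma snapshot_mass (a : ℕ → ℝ) (p : ℕ → ℕ → ℝ) (hp : IsSnapshotLaw a p) :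
    ∀ n, 1 ≤ n → ∑ k ∈ Finset.Icc 1 n, p n k = 1 := by
  obtain ⟨h1, _hz, hr1, hrk⟩ := hp
  intro n hn
  induction n, hn using Nat.le_induction with
  | base => simpa using h1
  | succ m hm ih =>
    rw [sum_Icc_shift (fun k => p (m + 1) k) m]
    have : ∑ k ∈ Finset.Icc 1 m, p (m + 1) (k + 1)
        = ∑ k ∈ Finset.Icc 1 m, (1 - a (m + 1)) * p m k := by
      refine Finset.sum_congr rfl fun k hk => ?_
      simp only [Finset.mem_Icc] at hk
      exact hrk m k hm hk.1 hk.2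
    rw [this, ← Finset.mul_sum, ih, hr1 m hm]
    ring

lemma snapshot_exp_rec (a : ℕ → ℝ) (p : ℕ → ℕ → ℝ) (hp : IsSnapshotLaw a p) :
    ∀ n, 1 ≤ n → snapExp p (n + 1) = 1 + (1 - a (n + 1)) * snapExp p n := by
  intro n hn
  obtain ⟨h1, _hz, hr1, hrk⟩ := hp
  unfold snapExp
  rw [sum_Icc_shift (fun k => (k : ℝ) * p (n + 1) k) n]
  have : ∑ k ∈ Finset.Icc 1 n, ((k : ℝ) + 1) * p (n + 1) (k + 1)
      = ∑ k ∈ Finset.Icc 1 n, (1 - a (n + 1)) * (((k : ℝ) + 1) * p n k) := by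
    refine Finset.sum_congr rfl fun k hk => ?_
    simp only [Finset.mem_Icc] at hk
    rw [hrk n k hn hk.1 hk.2]; ring
  simp only [Nat.cast_add, Nat.cast_one] at this ⊢
  rw [this, ← Finset.mul_sum, hr1 n hn]
  have hsplit : ∑ k ∈ Finset.Icc 1 n, (((k : ℝ) + 1) * p n k)
      = (∑ k ∈ Finset.Icc 1 n, (k : ℝ) * p n k) + ∑ k ∈ Finset.Icc 1 n, p n k := by
    rw [← Finset.sum_add_distrib]
    refine Finset.sum_congr rfl fun k _ => by ring
  rw [hsplit, snapshot_mass a p ⟨h1, _hz, hr1, hrk⟩ n hn]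
  ring

lemma sqrt_tendsto_atTop : Tendsto Real.sqrt atTop atTop := by
  rw [tendsto_atTop_atTop]
  intro b
  refine ⟨max 0 b ^ 2, fun x hx => ?_⟩
  calc b ≤ max 0 b := le_max_right _ _
    _ = Real.sqrt ((max 0 b) ^ 2) := (Real.sqrt_sq (le_max_left _ _)).symm
    _ ≤ Real.sqrt x := Real.sqrt_le_sqrt hx

theorem snapshot_linear_expectation (g : ℝ) (hg : 0 < g)
    (a : ℕ → ℝ) (p : ℕ → ℕ → ℝ)
    (ha : ∀ n, a n = min 1 (g / (n : ℝ)))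
    (hp : IsSnapshotLaw a p) :
    Tendsto (fun n : ℕ => snapExp p n / (n : ℝ)) atTop (nhds (1 / (g + 1))) := by
  have hg1 : (0:ℝ) < g + 1 := by linarith
  -- error term
  set e : ℕ → ℝ := fun n => snapExp p n - (n : ℝ) / (g + 1) with he
  -- key one-step bound for large n
  have hstep : ∀ n : ℕ, 1 ≤ n → g ≤ (n : ℝ) + 1 →
      |e (n + 1)| ≤ |e n| + g / ((n : ℝ) + 1) := by
    intro n hn hgn
    have hnpos : (0:ℝ) < (n : ℝ) + 1 := by positivity
    have haval : a (n + 1) = g / ((n : ℝ) + 1) := by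
      rw [ha (n + 1)]
      push_cast
      rw [min_eq_right]
      exact (div_le_one hnpos).mpr hgn
    have hrec := snapshot_exp_rec a p hp n hn
    have heq : e (n + 1) = (1 - g / ((n : ℝ) + 1)) * e n + g / ((g + 1) * ((n : ℝ) + 1)) := by
      simp only [he]
      rw [hrec, haval]
      push_cast
      field_simp
      ring
    rw [heq]
    have h1 : |1 - g / ((n : ℝ) + 1)| ≤ 1 := by
      rw [abs_le]
      constructor
      · have : g / ((n : ℝ) + 1) ≤ 1 := (div_le_one hnpos).mpr hgn
        linarith
      · have : 0 ≤ g / ((n : ℝ) + 1) := by positivity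
        linarith
    calc |(1 - g / ((n : ℝ) + 1)) * e n + g / ((g + 1) * ((n : ℝ) + 1))|
        ≤ |(1 - g / ((n : ℝ) + 1)) * e n| + |g / ((g + 1) * ((n : ℝ) + 1))| := abs_add_le _ _
      _ = |1 - g / ((n : ℝ) + 1)| * |e n| + g / ((g + 1) * ((n : ℝ) + 1)) := by
          rw [abs_mul,
            abs_of_nonneg (show (0:ℝ) ≤ g / ((g + 1) * ((n : ℝ) + 1)) by positivity)]
      _ ≤ 1 * |e n| + g / ((n : ℝ) + 1) := by
          have hA : |1 - g / ((n : ℝ) + 1)| * |e n| ≤ 1 * |e n| :=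
            mul_le_mul_of_nonneg_right h1 (abs_nonneg _)
          have hB : g / ((g + 1) * ((n : ℝ) + 1)) ≤ g / ((n : ℝ) + 1) :=
            div_le_div_of_nonneg_left hg.le hnpos (by nlinarith)
          linarith
      _ = |e n| + g / ((n : ℝ) + 1) := by ring
  -- choose N0
  obtain ⟨N0, hN0g⟩ := exists_nat_ge g
  set N : ℕ := max N0 1 with hN
  have hN1 : 1 ≤ N := le_max_right _ _
  have hNg : g ≤ (N : ℝ) := le_trans hN0g (by exact_mod_cast Nat.cast_le.mpr (le_max_left _ _))
  set C : ℝ := |e N| + 2 * g with hC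
  have hC2g : 2 * g ≤ C := by
    have := abs_nonneg (e N); linarith
  have hCpos : 0 ≤ C := by
    have := abs_nonneg (e N); linarith
  -- |e n| ≤ C √n for n ≥ N
  have hbound : ∀ n, N ≤ n → |e n| ≤ C * Real.sqrt n := by
    intro n hn
    induction n, hn using Nat.le_induction with
    | base =>
      have h1 : (1:ℝ) ≤ Real.sqrt N := Real.one_le_sqrt.mpr (by exact_mod_cast hN1)
      have hEC : |e N| ≤ C := by simp only [hC]; linarith [hg.le]
      calc |e N| = |e N| * 1 := by ring
        _ ≤ C * Real.sqrt N := mul_le_mul hEC h1 zero_le_one hCpos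
    | succ m hm ih =>
      have hm1 : 1 ≤ m := le_trans hN1 hm
      have hmg : g ≤ (m : ℝ) + 1 := by
        have : (N : ℝ) ≤ m := by exact_mod_cast hm
        linarith
      have hs := hstep m hm1 hmg
      have hmpos : (0:ℝ) < (m : ℝ) + 1 := by positivity
      have hsq : Real.sqrt ((m : ℝ) + 1) ≤ Real.sqrt ((m:ℝ) + 1) := le_refl _
      have hsqpos : 0 < Real.sqrt ((m : ℝ) + 1) := Real.sqrt_pos.mpr hmpos
      -- key: C √m + g/(m+1) ≤ C √(m+1)
      have hkey : C * Real.sqrt m + g / ((m : ℝ) + 1) ≤ C * Real.sqrt ((m : ℝ) + 1) := by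
        have hdiff : Real.sqrt ((m : ℝ) + 1) - Real.sqrt m
            = ((m:ℝ) + 1 - m) / (Real.sqrt ((m:ℝ)+1) + Real.sqrt m) := by
          rw [eq_div_iff (by positivity)]
          have e1 : Real.sqrt ((m:ℝ)+1) * Real.sqrt ((m:ℝ)+1) = (m:ℝ)+1 :=
            Real.mul_self_sqrt (by positivity)
          have e2 : Real.sqrt (m:ℝ) * Real.sqrt (m:ℝ) = (m:ℝ) :=
            Real.mul_self_sqrt (by positivity)
          nlinarith [Real.sqrt_nonneg ((m:ℝ)+1), Real.sqrt_nonneg (m:ℝ)]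
        have hlb : 1 / (2 * Real.sqrt ((m:ℝ)+1)) ≤ Real.sqrt ((m:ℝ)+1) - Real.sqrt m := by
          rw [hdiff]
          simp only [add_sub_cancel_left]
          apply div_le_div_of_nonneg_left one_pos.le (by positivity)
          have : Real.sqrt (m:ℝ) ≤ Real.sqrt ((m:ℝ)+1) := Real.sqrt_le_sqrt (by linarith)
          linarith
        have hone : (1:ℝ) ≤ Real.sqrt ((m:ℝ)+1) := by
          rw [Real.one_le_sqrt]
          have : (0:ℝ) ≤ (m:ℝ) := Nat.cast_nonneg m
          linarith
        have hsqsq : Real.sqrt ((m:ℝ)+1) * Real.sqrt ((m:ℝ)+1) = (m:ℝ)+1 :=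
          Real.mul_self_sqrt (by positivity)
        have h3 : 2 * g ≤ C * Real.sqrt ((m:ℝ)+1) := by
          calc 2 * g ≤ C := hC2g
            _ = C * 1 := (mul_one C).symm
            _ ≤ C * Real.sqrt ((m:ℝ)+1) := mul_le_mul_of_nonneg_left hone hCpos
        have h2 : g / ((m : ℝ) + 1) ≤ C * (1 / (2 * Real.sqrt ((m:ℝ)+1))) := by
          rw [mul_one_div, div_le_div_iff₀ hmpos (by positivity)]
          calc g * (2 * Real.sqrt ((m:ℝ)+1)) = (2 * g) * Real.sqrt ((m:ℝ)+1) := by ring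
            _ ≤ (C * Real.sqrt ((m:ℝ)+1)) * Real.sqrt ((m:ℝ)+1) :=
                mul_le_mul_of_nonneg_right h3 (Real.sqrt_nonneg _)
            _ = C * ((m:ℝ)+1) := by rw [mul_assoc, hsqsq]
        have hc' := mul_le_mul_of_nonneg_left hlb hCpos
        rw [mul_sub] at hc'
        linarith
      calc |e (m + 1)| ≤ |e m| + g / ((m : ℝ) + 1) := hs
        _ ≤ C * Real.sqrt m + g / ((m : ℝ) + 1) := add_le_add_left ih _
        _ ≤ C * Real.sqrt ((m : ℝ) + 1) := hkey
        _ = C * Real.sqrt ((m + 1 : ℕ) : ℝ) := by push_cast; ring_nf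
  -- e n / n → 0
  have htend0 : Tendsto (fun n : ℕ => e n / (n : ℝ)) atTop (nhds 0) := by
    apply squeeze_zero_norm' (a := fun n : ℕ => C / Real.sqrt n)
    · filter_upwards [eventually_ge_atTop N, eventually_ge_atTop 1] with n hn hn1
      have hnpos : (0:ℝ) < (n : ℝ) := by exact_mod_cast hn1
      have hb := hbound n hn
      rw [Real.norm_eq_abs, abs_div, abs_of_nonneg hnpos.le]
      rw [div_le_div_iff₀ hnpos (Real.sqrt_pos.mpr hnpos)]
      have hss : Real.sqrt (n:ℝ) * Real.sqrt (n:ℝ) = (n:ℝ) := Real.mul_self_sqrt hnpos.le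
      calc |e n| * Real.sqrt (n:ℝ) ≤ C * Real.sqrt (n:ℝ) * Real.sqrt (n:ℝ) := by
            apply mul_le_mul_of_nonneg_right hb (Real.sqrt_nonneg _)
        _ = C * (n:ℝ) := by rw [mul_assoc, hss]
    · apply Tendsto.div_atTop tendsto_const_nhds
      exact sqrt_tendsto_atTop.comp tendsto_natCast_atTop_atTop
  -- conclude
  have heventually : ∀ᶠ n : ℕ in atTop,
      e n / (n : ℝ) + 1 / (g + 1) = snapExp p n / (n : ℝ) := by
    filter_upwards [eventually_ge_atTop 1] with n hn1
    have hnpos : (0:ℝ) < (n : ℝ) := by exact_mod_cast hn1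
    simp only [he]
    field_simp
    ring
  have : Tendsto (fun n : ℕ => e n / (n : ℝ) + 1 / (g + 1)) atTop (nhds (0 + 1 / (g + 1))) :=
    htend0.add tendsto_const_nhds
  rw [zero_add] at this
  exact this.congr' heventually
end
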